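/- arXiv:1503.08534 — 4 statements merged into one kernel-verified Lean document; each statement's English description precedes it below -/
import Mathlib

section
/- For all real x, Σ_{i=1}^∞ x^{2i-1}/(2i-1)!! = e^{x²/2} ∫_0^x e^{-y²/2} dy. -/
/-! The series `S x = ∑ x^(2n+1)/(2n+1)!!` solves `S' = 1 + x S`, `S 0 = 0`: differentiated
termwise, `x^(2n+1)/(2n+1)!!` becomes `x^(2n)/(2n-1)!!`. Hence `e^{-x²/2} S x` has derivative
`e^{-x²/2}`, and the fundamental theorem of calculus gives `S x = e^{x²/2} ∫_0^x e^{-y²/2} dy`. -/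

open Real

/-- `oddFact k = (2k-1)!!`, with `oddFact 0 = (-1)!! = 1`. -/
def oddFact : ℕ → ℕ
  | 0 => 1
  | k + 1 => (2 * k + 1) * oddFact k

namespace oddFact

theorem pos (n : ℕ) : 0 < oddFact n := by
  induction n with
  | zero => exact Nat.one_pos
  | succ k ih => exact Nat.mul_pos (Nat.succ_pos _) ih

theorem cast_succ (n : ℕ) : (oddFact (n + 1) : ℝ) = (2 * n + 1) * oddFact n := by
  simp only [oddFact]; push_cast; ring

theorem le_succ (n : ℕ) : oddFact n ≤ oddFact (n + 1) :=
  Nat.le_mul_of_pos_left _ (Nat.succ_pos _)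

theorem factorial_le (n : ℕ) : n.factorial ≤ oddFact n := by
  induction n with
  | zero => exact le_rfl
  | succ k ih => exact Nat.mul_le_mul (by omega) ih

end oddFact

theorem abs_pow_two_mul_div_oddFact_le (x : ℝ) (n : ℕ) :
    |x ^ (2 * n) / oddFact n| ≤ (x ^ 2) ^ n / n.factorial := by
  rw [abs_div, Nat.abs_cast, abs_pow, pow_mul, sq_abs]
  gcongr
  exact_mod_cast oddFact.factorial_le n

theorem summable_pow_two_mul_div_oddFact (x : ℝ) :
    Summable fun n : ℕ ↦ x ^ (2 * n) / oddFact n :=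
  .of_norm_bounded (summable_pow_div_factorial (x ^ 2)) (abs_pow_two_mul_div_oddFact_le x)

theorem hasDerivAt_pow_two_mul_add_one_div_oddFact_succ (n : ℕ) (y : ℝ) :
    HasDerivAt (fun z : ℝ ↦ z ^ (2 * n + 1) / oddFact (n + 1)) (y ^ (2 * n) / oddFact n) y := by
  refine ((hasDerivAt_pow (2 * n + 1) y).div_const _).congr_deriv ?_
  have : (oddFact n : ℝ) ≠ 0 := Nat.cast_ne_zero.2 (oddFact.pos n).ne'
  rw [oddFact.cast_succ]
  field_simp
  push_cast
  ring

noncomputable def oddSeries (x : ℝ) : ℝ :=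
  ∑' n : ℕ, x ^ (2 * n + 1) / oddFact (n + 1)

theorem oddSeries_zero : oddSeries 0 = 0 := by
  simp [oddSeries]

theorem tsum_pow_two_mul_div_oddFact (x : ℝ) :
    ∑' n : ℕ, x ^ (2 * n) / oddFact n = 1 + x * oddSeries x := by
  rw [(summable_pow_two_mul_div_oddFact x).tsum_eq_zero_add, oddSeries, ← tsum_mul_left]
  congr 1
  · simp [oddFact]
  · congr 1 with n
    rw [mul_add_one, pow_succ']
    ring

theorem hasDerivAt_oddSeries (x : ℝ) : HasDerivAt oddSeries (1 + x * oddSeries x) x := by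
  rw [← tsum_pow_two_mul_div_oddFact x]
  refine hasDerivAt_tsum_of_isPreconnected (summable_pow_two_mul_div_oddFact (|x| + 1))
    Metric.isOpen_ball (convex_ball _ _).isPreconnected
    (fun n y _ ↦ hasDerivAt_pow_two_mul_add_one_div_oddFact_succ n y) (fun n y hy ↦ ?_)
    (Metric.mem_ball_self (by positivity : (0 : ℝ) < |x| + 1)) (by simp)
    (by simp : x ∈ Metric.ball (0 : ℝ) (|x| + 1))
  rw [mem_ball_zero_iff, Real.norm_eq_abs] at hy
  rw [Real.norm_eq_abs, abs_div, Nat.abs_cast, abs_pow]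
  gcongr

theorem eq_exp_mul_integral_of_hasDerivAt {f : ℝ → ℝ}
    (hf : ∀ y, HasDerivAt f (1 + y * f y) y) (hf0 : f 0 = 0) (x : ℝ) :
    f x = exp (x ^ 2 / 2) * ∫ y in (0 : ℝ)..x, exp (-y ^ 2 / 2) := by
  have hderiv : ∀ y, HasDerivAt (fun z ↦ exp (-z ^ 2 / 2) * f z) (exp (-y ^ 2 / 2)) y := by
    intro y
    have hexp : HasDerivAt (fun z ↦ exp (-z ^ 2 / 2)) (exp (-y ^ 2 / 2) * -y) y := by
      refine HasDerivAt.exp (HasDerivAt.congr_deriv ((hasDerivAt_pow 2 y).neg.div_const 2) ?_)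
      ring
    refine (hexp.mul (hf y)).congr_deriv ?_
    ring
  have hFTC : ∫ y in (0 : ℝ)..x, exp (-y ^ 2 / 2) = exp (-x ^ 2 / 2) * f x := by
    rw [intervalIntegral.integral_eq_sub_of_hasDerivAt (fun y _ ↦ hderiv y)
      ((by fun_prop : Continuous fun y : ℝ ↦ exp (-y ^ 2 / 2)).intervalIntegrable _ _), hf0,
      mul_zero, sub_zero]
  rw [hFTC, ← mul_assoc, ← exp_add, neg_div, add_neg_cancel, exp_zero, one_mul]

/-- For all real `x`, `∑_{i=1}^∞ x^{2i-1}/(2i-1)!! = e^{x²/2} ∫_0^x e^{-y²/2} dy`. -/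
theorem stmt1 (x : ℝ) :
    ∑' n : ℕ, x ^ (2 * (n + 1) - 1) / (oddFact (n + 1) : ℝ) =
      Real.exp (x ^ 2 / 2) * ∫ y in (0:ℝ)..x, Real.exp (-y ^ 2 / 2) :=
  eq_exp_mul_integral_of_hasDerivAt hasDerivAt_oddSeries oddSeries_zero x
end

section
/- The function h(x) = x·g(x), where g(x) = e^{x²/2}∫_0^x e^{-y²/2} dy, is strictly increasing on (0,∞), tends to 0 as x→0⁺ and to ∞ as x→∞; hence for each α ∈ (0,1) there is a unique ℓ > 0 with ℓ·g(ℓ) = (1-α)/α. -/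
open Real Set Filter

/-- `g x = e^{x²/2} ∫_0^x e^{-y²/2} dy`. -/
noncomputable def gFun (x : ℝ) : ℝ := Real.exp (x ^ 2 / 2) * ∫ y in (0:ℝ)..x, Real.exp (-y ^ 2 / 2)

lemma contInt : Continuous fun y : ℝ => Real.exp (-y ^ 2 / 2) := by
  continuity

lemma intInt (a b : ℝ) : IntervalIntegrable (fun y : ℝ => Real.exp (-y ^ 2 / 2))
    MeasureTheory.volume a b := contInt.intervalIntegrable a b

lemma Fpos {x : ℝ} (hx : 0 < x) : 0 < ∫ y in (0:ℝ)..x, Real.exp (-y ^ 2 / 2) :=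
  intervalIntegral.intervalIntegral_pos_of_pos (intInt 0 x) (fun y => Real.exp_pos _) hx

lemma Fmono {a b : ℝ} (ha : 0 ≤ a) (hab : a < b) :
    (∫ y in (0:ℝ)..a, Real.exp (-y ^ 2 / 2)) < ∫ y in (0:ℝ)..b, Real.exp (-y ^ 2 / 2) := by
  have h := intervalIntegral.integral_add_adjacent_intervals (intInt 0 a) (intInt a b)
  have hpos : 0 < ∫ y in a..b, Real.exp (-y ^ 2 / 2) :=
    intervalIntegral.intervalIntegral_pos_of_pos (intInt a b) (fun y => Real.exp_pos _) hab
  linarith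

lemma gpos {x : ℝ} (hx : 0 < x) : 0 < gFun x :=
  mul_pos (Real.exp_pos _) (Fpos hx)

lemma gmono : StrictMonoOn gFun (Ioi (0:ℝ)) := by
  intro a ha b hb hab
  exact mul_lt_mul'' (Real.exp_lt_exp.2 (by nlinarith [mem_Ioi.1 ha])) (Fmono (le_of_lt ha) hab)
    (Real.exp_pos _).le (Fpos ha).le

lemma contg : Continuous gFun := by
  exact (Real.continuous_exp.comp (by continuity)).mul
    (intervalIntegral.continuous_primitive intInt 0)

/-- `h x = x * g x` is strictly increasing on `(0,∞)`, tends to `0` as `x → 0⁺` and to `∞`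
as `x → ∞`; hence for each `α ∈ (0,1)` there is a unique `ℓ > 0` with
`ℓ * g ℓ = (1-α)/α`. -/
theorem stmt2 :
    StrictMonoOn (fun x => x * gFun x) (Ioi (0:ℝ)) ∧
    Tendsto (fun x => x * gFun x) (nhdsWithin 0 (Ioi 0)) (nhds 0) ∧
    Tendsto (fun x => x * gFun x) atTop atTop ∧
    ∀ α : ℝ, α ∈ Ioo (0:ℝ) 1 → ∃! ℓ : ℝ, 0 < ℓ ∧ ℓ * gFun ℓ = (1 - α) / α := by
  have hconth : Continuous fun x => x * gFun x := continuous_id.mul contg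
  have hmono : StrictMonoOn (fun x => x * gFun x) (Ioi (0:ℝ)) := by
    intro a ha b hb hab
    exact mul_lt_mul'' hab (gmono ha hb hab) (le_of_lt ha) (gpos ha).le
  have h0 : Tendsto (fun x => x * gFun x) (nhdsWithin 0 (Ioi 0)) (nhds 0) := by
    have := (hconth.tendsto 0).mono_left (nhdsWithin_le_nhds (s := Ioi (0:ℝ)))
    simpa [gFun] using this
  have htop : Tendsto (fun x => x * gFun x) atTop atTop := by
    set c := ∫ y in (0:ℝ)..1, Real.exp (-y ^ 2 / 2) with hc
    have hcpos : 0 < c := Fpos one_pos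
    have hlb : ∀ᶠ x in atTop, c * x ≤ x * gFun x := by
      filter_upwards [eventually_ge_atTop (1:ℝ)] with x hx
      have hxpos : (0:ℝ) < x := lt_of_lt_of_le one_pos hx
      have h1 : c ≤ ∫ y in (0:ℝ)..x, Real.exp (-y ^ 2 / 2) := by
        rcases eq_or_lt_of_le hx with h | h
        · rw [← h]
        · exact (Fmono zero_le_one h).le
      have h2 : (1:ℝ) ≤ Real.exp (x ^ 2 / 2) := by
        rw [← Real.exp_zero]
        exact Real.exp_le_exp.2 (by positivity)
      have : 1 * c ≤ gFun x :=
        mul_le_mul h2 h1 hcpos.le (Real.exp_pos _).le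
      nlinarith [gpos hxpos]
    exact tendsto_atTop_mono' _ hlb (tendsto_atTop_mono' _
      (Eventually.of_forall fun x => le_refl _) ((tendsto_id (α := ℝ)).const_mul_atTop hcpos))
  refine ⟨hmono, h0, htop, ?_⟩
  intro α hα
  set t := (1 - α) / α with ht
  have htpos : 0 < t := div_pos (by linarith [hα.2]) hα.1
  -- find a with h a < t
  have hsmall : ∃ a, 0 < a ∧ a * gFun a < t := by
    have := h0.eventually (eventually_lt_nhds htpos)
    rcases (this.and self_mem_nhdsWithin).exists with ⟨a, h1, h2⟩
    exact ⟨a, h2, h1⟩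
  obtain ⟨a, hapos, hat⟩ := hsmall
  have hbig : ∃ b, a < b ∧ t < b * gFun b := by
    rcases ((htop.eventually (eventually_gt_atTop t)).and (eventually_gt_atTop a)).exists
      with ⟨b, h1, h2⟩
    exact ⟨b, h2, h1⟩
  obtain ⟨b, hab, hbt⟩ := hbig
  have := intermediate_value_Icc hab.le (hconth.continuousOn (s := Icc a b))
  have hmem : t ∈ Icc ((fun x => x * gFun x) a) ((fun x => x * gFun x) b) :=
    ⟨hat.le, hbt.le⟩
  obtain ⟨ℓ, hℓmem, hℓeq⟩ := this hmem
  have hℓeq' : ℓ * gFun ℓ = t := hℓeq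
  refine ⟨ℓ, ⟨lt_of_lt_of_le hapos hℓmem.1, hℓeq'⟩, ?_⟩
  intro y hy
  exact hmono.injOn (mem_Ioi.2 hy.1) (mem_Ioi.2 (lt_of_lt_of_le hapos hℓmem.1))
    (by rw [hy.2, hℓeq'])
end

section
/- Let q > 0 satisfy (α/2)q = (1-α)e^{-q²/2}/(√(2π)Φ([-q,q])), and let m_{2k} = (1-α)·∫_{-q}^q x^{2k} e^{-x²/2} dx / ∫_{-q}^q e^{-x²/2} dx denote the 2k-th moment of the measure (1-α)Φ_q. Then m_{2k} = (2k-1)·m_{2k-2} - α·q^{2k} for all k ≥ 1, with m_0 = 1-α. -/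
open Real

/-! Integrating `x ^ (n + 1) · (x e^{-x²/2})` by parts gives the recursion
`∫ x^(n+2) e^{-x²/2} = (n + 1) ∫ x^n e^{-x²/2} - [x^(n+1) e^{-x²/2}]`, whose boundary term on
`[-q, q]` is `2 q^(2k-1) e^{-q²/2}` for even exponents. The defining equation of `q` says
precisely that `(1 - α) e^{-q²/2} = (α / 2) q ∫_{-q}^q e^{-x²/2}`, so after normalising, the
boundary term becomes `α q^(2k)`. -/

theorem hasDerivAt_neg_exp_neg_sq_div_two (x : ℝ) :
    HasDerivAt (fun y : ℝ => -exp (-y ^ 2 / 2)) (x * exp (-x ^ 2 / 2)) x := by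
  refine (((hasDerivAt_pow 2 x).neg.div_const 2).exp.neg).congr_deriv ?_
  simp only [Pi.neg_apply, Nat.cast_ofNat, pow_one, Nat.add_one_sub_one]
  ring

theorem integral_pow_add_two_mul_exp_neg_sq_div_two (a b : ℝ) (n : ℕ) :
    ∫ x in a..b, x ^ (n + 2) * exp (-x ^ 2 / 2) =
      (n + 1) * (∫ x in a..b, x ^ n * exp (-x ^ 2 / 2)) -
        (b ^ (n + 1) * exp (-b ^ 2 / 2) - a ^ (n + 1) * exp (-a ^ 2 / 2)) := by
  have hparts := intervalIntegral.integral_mul_deriv_eq_deriv_mul (a := a) (b := b)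
    (fun x _ => hasDerivAt_pow (n + 1) x)
    (fun x _ => hasDerivAt_neg_exp_neg_sq_div_two x)
    ((by fun_prop : Continuous fun x : ℝ => ((n + 1 : ℕ) : ℝ) * x ^ (n + 1 - 1)
      ).intervalIntegrable _ _)
    ((by fun_prop : Continuous fun x : ℝ => x * exp (-x ^ 2 / 2)).intervalIntegrable _ _)
  have hlhs : (fun x : ℝ => x ^ (n + 1) * (x * exp (-x ^ 2 / 2))) =
      fun x => x ^ (n + 2) * exp (-x ^ 2 / 2) := by
    ext x; ring
  have hrhs : (fun x : ℝ => ((n + 1 : ℕ) : ℝ) * x ^ (n + 1 - 1) * -exp (-x ^ 2 / 2)) =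
      fun x => -((n + 1) * (x ^ n * exp (-x ^ 2 / 2))) := by
    ext x; push_cast; ring
  rw [hlhs, hrhs, intervalIntegral.integral_neg, intervalIntegral.integral_const_mul] at hparts
  rw [hparts]
  ring

theorem integral_symm_pow_two_mul_add_two_mul_exp_neg_sq_div_two (q : ℝ) (n : ℕ) :
    ∫ x in -q..q, x ^ (2 * n + 2) * exp (-x ^ 2 / 2) =
      (2 * n + 1) * (∫ x in -q..q, x ^ (2 * n) * exp (-x ^ 2 / 2)) -
        2 * q ^ (2 * n + 1) * exp (-q ^ 2 / 2) := by
  rw [integral_pow_add_two_mul_exp_neg_sq_div_two, Odd.neg_pow ⟨n, rfl⟩, neg_sq]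
  push_cast
  ring

theorem integral_exp_neg_sq_div_two_pos {q : ℝ} (hq : 0 < q) :
    0 < ∫ x in -q..q, exp (-x ^ 2 / 2) :=
  intervalIntegral.intervalIntegral_pos_of_pos_on
    ((by fun_prop : Continuous fun x : ℝ => exp (-x ^ 2 / 2)).intervalIntegrable _ _)
    (fun x _ => exp_pos _) (by linarith)

theorem stmt5_general (α q : ℝ) (hq : 0 < q)
    (hqeq : α / 2 * q = (1 - α) * Real.exp (-q ^ 2 / 2) /
        (Real.sqrt (2 * π) *
          ((1 / Real.sqrt (2 * π)) * ∫ x in (-q)..q, Real.exp (-x ^ 2 / 2))))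
    (m : ℕ → ℝ)
    (hm : ∀ k : ℕ, m k = (1 - α) * (∫ x in (-q)..q, x ^ (2 * k) * Real.exp (-x ^ 2 / 2)) /
        ∫ x in (-q)..q, Real.exp (-x ^ 2 / 2)) :
    m 0 = 1 - α ∧ ∀ k : ℕ, 1 ≤ k → m k = (2 * k - 1) * m (k - 1) - α * q ^ (2 * k) := by
  set Z := ∫ x in (-q)..q, exp (-x ^ 2 / 2)
  have hZ : 0 < Z := integral_exp_neg_sq_div_two_pos hq
  have hboundary : (1 - α) * exp (-q ^ 2 / 2) = α / 2 * q * Z := by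
    have hsqrt : sqrt (2 * π) ≠ 0 := by positivity
    rw [hqeq]
    field_simp
  refine ⟨?_, fun k hk => ?_⟩
  · rw [hm 0]
    simp only [mul_zero, pow_zero, one_mul]
    exact mul_div_cancel_right₀ _ hZ.ne'
  · obtain ⟨n, rfl⟩ := Nat.exists_eq_add_of_le' hk
    rw [hm, hm, Nat.add_sub_cancel, mul_add_one,
      integral_symm_pow_two_mul_add_two_mul_exp_neg_sq_div_two]
    field_simp
    push_cast
    simp only [neg_div] at hboundary ⊢
    linear_combination (-2 * q ^ (2 * n + 1)) * hboundary

/-- Moments of `(1-α)Φ_q` satisfy the recursion `m_{2k} = (2k-1)m_{2k-2} - α q^{2k}`,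
with `m_0 = 1 - α`. -/
theorem stmt5 (α q : ℝ) (hα : α ∈ Set.Ioo (0:ℝ) 1) (hq : 0 < q)
    (hqeq : α / 2 * q = (1 - α) * Real.exp (-q ^ 2 / 2) /
        (Real.sqrt (2 * π) *
          ((1 / Real.sqrt (2 * π)) * ∫ x in (-q)..q, Real.exp (-x ^ 2 / 2))))
    (m : ℕ → ℝ)
    (hm : ∀ k : ℕ, m k = (1 - α) * (∫ x in (-q)..q, x ^ (2 * k) * Real.exp (-x ^ 2 / 2)) /
        ∫ x in (-q)..q, Real.exp (-x ^ 2 / 2)) :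
    m 0 = 1 - α ∧ ∀ k : ℕ, 1 ≤ k → m k = (2 * k - 1) * m (k - 1) - α * q ^ (2 * k) :=
  stmt5_general α q hq hqeq m hm
end

section
/- Let α ∈ (0,1) and define P_k by P_0 = 1-α, P_k(x) = (2k-1)P_{k-1}(x) - αx^{2k}. If ℓ > 0 satisfies 0 ≤ P_k(ℓ) ≤ (1-α)ℓ^{2k} for all k ≥ 0, then ℓ·g(ℓ) = (1-α)/α where g(ℓ) = e^{ℓ²/2}∫_0^ℓ e^{-y²/2} dy; in particular such ℓ is unique. -/
/-!
Let `J_k = α ℓ e^{ℓ²/2} ∫₀^ℓ y^{2k} e^{-y²/2} dy`. Integration by parts shows that `J_k` obeys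
the same recurrence as `P_k(ℓ)`, so `d_k = P_k(ℓ) - J_k` satisfies `d_k = (2k-1) d_{k-1}` and
hence `|d_k| ≥ k! |d_0|`. On the other hand the hypotheses bound `P_k(ℓ)`, and the trivial
estimate of the integral bounds `J_k`, by a geometric sequence in `ℓ²`. Therefore
`d_0 = 1 - α - α ℓ g(ℓ)` vanishes. Uniqueness holds because `x ↦ x g(x)` is strictly increasing
on `[0, ∞)`.
-/

open Real Filter Topology Nat

theorem eq_zero_of_factorial_growth_of_le_geometric {d : ℕ → ℝ}
    (hgrowth : ∀ k : ℕ, ((k : ℝ) + 1) * |d k| ≤ |d (k + 1)|) {C r : ℝ}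
    (hbound : ∀ k, |d k| ≤ C * r ^ k) : d 0 = 0 := by
  have hfact : ∀ k, (k ! : ℝ) * |d 0| ≤ |d k| := by
    intro k
    induction k with
    | zero => simp
    | succ k ih =>
      calc ((k + 1)! : ℝ) * |d 0| = (k + 1 : ℝ) * ((k ! : ℝ) * |d 0|) := by
            push_cast [Nat.factorial_succ]; ring
        _ ≤ (k + 1 : ℝ) * |d k| := by gcongr
        _ ≤ |d (k + 1)| := hgrowth k
  have hlim : Tendsto (fun k => C * (r ^ k / k !)) atTop (𝓝 0) := by
    simpa using (FloorSemiring.tendsto_pow_div_factorial_atTop r).const_mul C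
  refine abs_nonpos_iff.mp (ge_of_tendsto' hlim fun k => ?_)
  rw [mul_div_assoc', le_div_iff₀ (by positivity), mul_comm]
  exact (hfact k).trans (hbound k)

noncomputable def gaussMoment (n : ℕ) (x : ℝ) : ℝ :=
  ∫ y in (0 : ℝ)..x, y ^ n * exp (-y ^ 2 / 2)

theorem gaussMoment_add_two (n : ℕ) (x : ℝ) :
    gaussMoment (n + 2) x = (n + 1) * gaussMoment n x - x ^ (n + 1) * exp (-x ^ 2 / 2) := by
  have hu : ∀ y ∈ Set.uIcc 0 x, HasDerivAt (fun y : ℝ => y ^ (n + 1)) ((n + 1) * y ^ n) y :=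
    fun y _ => by simpa using hasDerivAt_pow (n + 1) y
  have hv : ∀ y ∈ Set.uIcc 0 x,
      HasDerivAt (fun y : ℝ => -exp (-y ^ 2 / 2)) (y * exp (-y ^ 2 / 2)) y := by
    intro y _
    have hsq : HasDerivAt (fun y : ℝ => -y ^ 2 / 2) (-y) y :=
      ((hasDerivAt_pow 2 y).neg.div_const 2).congr_deriv (by push_cast; ring)
    exact hsq.exp.neg.congr_deriv (by ring)
  have hparts := intervalIntegral.integral_mul_deriv_eq_deriv_mul hu hv
    (Continuous.intervalIntegrable (by fun_prop) _ _)
    (Continuous.intervalIntegrable (by fun_prop) _ _)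
  simp only [mul_neg, intervalIntegral.integral_neg, mul_assoc,
    intervalIntegral.integral_const_mul] at hparts
  calc gaussMoment (n + 2) x = ∫ y in (0 : ℝ)..x, y ^ (n + 1) * (y * exp (-y ^ 2 / 2)) := by
        unfold gaussMoment; congr 1; ext y; ring
    _ = _ := by rw [hparts, gaussMoment]; simp; ring

theorem gaussMoment_nonneg (n : ℕ) {x : ℝ} (hx : 0 ≤ x) : 0 ≤ gaussMoment n x :=
  intervalIntegral.integral_nonneg hx fun y hy => by have := hy.1; positivity

theorem gaussMoment_le (n : ℕ) {x : ℝ} (hx : 0 ≤ x) : gaussMoment n x ≤ x ^ (n + 1) := by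
  calc gaussMoment n x ≤ ∫ _ in (0 : ℝ)..x, x ^ n := by
        refine intervalIntegral.integral_mono_on hx (Continuous.intervalIntegrable (by fun_prop) _ _)
          intervalIntegrable_const fun y hy => ?_
        calc y ^ n * exp (-y ^ 2 / 2) ≤ y ^ n * 1 := by
              gcongr
              · exact pow_nonneg hy.1 n
              · exact exp_le_one_iff.mpr (by nlinarith [sq_nonneg y])
          _ ≤ x ^ n := by rw [mul_one]; exact pow_le_pow_left₀ hy.1 hy.2 n
    _ = x ^ (n + 1) := by simp [pow_succ, mul_comm]

theorem strictMonoOn_mul_exp_mul_integral_exp :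
    StrictMonoOn (fun x : ℝ => x * (exp (x ^ 2 / 2) * ∫ y in (0 : ℝ)..x, exp (-y ^ 2 / 2)))
      (Set.Ici 0) := by
  intro a ha b hb hab
  have ha : 0 ≤ a := ha
  have hb : 0 < b := ha.trans_lt hab
  have hint : IntervalIntegrable (fun y : ℝ => exp (-y ^ 2 / 2)) MeasureTheory.volume 0 b :=
    Continuous.intervalIntegrable (by fun_prop) _ _
  have hexp : exp (a ^ 2 / 2) ≤ exp (b ^ 2 / 2) := exp_le_exp.mpr (by nlinarith)
  have hmono : (∫ y in (0 : ℝ)..a, exp (-y ^ 2 / 2)) ≤ ∫ y in (0 : ℝ)..b, exp (-y ^ 2 / 2) :=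
    intervalIntegral.integral_mono_interval le_rfl ha hab.le
      (Eventually.of_forall fun y => (exp_pos _).le) hint
  have hpos : 0 < ∫ y in (0 : ℝ)..b, exp (-y ^ 2 / 2) :=
    intervalIntegral.intervalIntegral_pos_of_pos_on hint (fun y _ => exp_pos _) hb
  have hnonneg : 0 ≤ ∫ y in (0 : ℝ)..a, exp (-y ^ 2 / 2) :=
    intervalIntegral.integral_nonneg ha fun y _ => (exp_pos _).le
  calc a * (exp (a ^ 2 / 2) * ∫ y in (0 : ℝ)..a, exp (-y ^ 2 / 2))
      ≤ a * (exp (b ^ 2 / 2) * ∫ y in (0 : ℝ)..b, exp (-y ^ 2 / 2)) := by gcongr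
    _ < b * (exp (b ^ 2 / 2) * ∫ y in (0 : ℝ)..b, exp (-y ^ 2 / 2)) := by gcongr

theorem mul_exp_mul_integral_exp_eq_of_recurrence {α ℓ : ℝ} (hα : 0 < α) (hℓ : 0 < ℓ)
    {p : ℕ → ℝ} (hp0 : p 0 = 1 - α)
    (hp : ∀ k : ℕ, p (k + 1) = (2 * k + 1) * p k - α * ℓ ^ (2 * k + 2))
    (hbound : ∀ k : ℕ, 0 ≤ p k ∧ p k ≤ (1 - α) * ℓ ^ (2 * k)) :
    ℓ * (exp (ℓ ^ 2 / 2) * ∫ y in (0 : ℝ)..ℓ, exp (-y ^ 2 / 2)) = (1 - α) / α := by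
  set c := α * ℓ * exp (ℓ ^ 2 / 2)
  set d : ℕ → ℝ := fun k => p k - c * gaussMoment (2 * k) ℓ
  have hE : exp (ℓ ^ 2 / 2) * exp (-ℓ ^ 2 / 2) = 1 := by rw [← exp_add]; ring_nf; exact exp_zero
  have hd : ∀ k : ℕ, d (k + 1) = (2 * k + 1) * d k := by
    intro k
    simp only [d, hp, show 2 * (k + 1) = 2 * k + 2 by ring, gaussMoment_add_two]
    push_cast
    linear_combination α * ℓ ^ (2 * k + 2) * hE
  have hd_bound : ∀ k : ℕ, |d k| ≤ (1 - α + c * ℓ) * (ℓ ^ 2) ^ k := by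
    intro k
    have hJ₀ : 0 ≤ c * gaussMoment (2 * k) ℓ :=
      mul_nonneg (by positivity) (gaussMoment_nonneg (2 * k) hℓ.le)
    have hJ₁ : c * gaussMoment (2 * k) ℓ ≤ c * ℓ * ℓ ^ (2 * k) := by
      calc c * gaussMoment (2 * k) ℓ ≤ c * ℓ ^ (2 * k + 1) := by
            gcongr; exact gaussMoment_le (2 * k) hℓ.le
        _ = c * ℓ * ℓ ^ (2 * k) := by ring
    rw [abs_sub_le_iff, ← pow_mul]
    obtain ⟨hp₀, hp₁⟩ := hbound k
    constructor <;> linarith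
  have hd0 : d 0 = 0 := by
    refine eq_zero_of_factorial_growth_of_le_geometric (fun k => ?_) hd_bound
    rw [hd k, abs_mul, abs_of_pos (by positivity : (0 : ℝ) < 2 * k + 1)]
    gcongr
    linarith
  simp only [d, hp0, gaussMoment, mul_zero, pow_zero, one_mul] at hd0
  rw [eq_div_iff hα.ne']
  linear_combination -hd0

/-- If `ℓ > 0` satisfies `0 ≤ P_k(ℓ) ≤ (1-α)ℓ^{2k}` for all `k ≥ 0`, where `P_0 = 1-α` and
`P_k(x) = (2k-1)P_{k-1}(x) - α x^{2k}`, then `ℓ·g(ℓ) = (1-α)/α` with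
`g(ℓ) = e^{ℓ²/2} ∫_0^ℓ e^{-y²/2} dy`; in particular such `ℓ` is unique. -/
theorem stmt8 (α : ℝ) (hα : α ∈ Set.Ioo (0:ℝ) 1) (P : ℕ → ℝ → ℝ)
    (hP0 : ∀ x : ℝ, P 0 x = 1 - α)
    (hP : ∀ k : ℕ, 1 ≤ k → ∀ x : ℝ, P k x = (2 * k - 1) * P (k - 1) x - α * x ^ (2 * k))
    (ℓ : ℝ) (hℓ : 0 < ℓ)
    (hineq : ∀ k : ℕ, 0 ≤ P k ℓ ∧ P k ℓ ≤ (1 - α) * ℓ ^ (2 * k)) :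
    ℓ * (Real.exp (ℓ ^ 2 / 2) * ∫ y in (0:ℝ)..ℓ, Real.exp (-y ^ 2 / 2)) = (1 - α) / α ∧
    ∀ ℓ' : ℝ, 0 < ℓ' → (∀ k : ℕ, 0 ≤ P k ℓ' ∧ P k ℓ' ≤ (1 - α) * ℓ' ^ (2 * k)) → ℓ' = ℓ := by
  have hsolution : ∀ x : ℝ, 0 < x → (∀ k : ℕ, 0 ≤ P k x ∧ P k x ≤ (1 - α) * x ^ (2 * k)) →
      x * (exp (x ^ 2 / 2) * ∫ y in (0:ℝ)..x, exp (-y ^ 2 / 2)) = (1 - α) / α := by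
    refine fun x hx hbound => mul_exp_mul_integral_exp_eq_of_recurrence hα.1 hx (hP0 x)
      (fun k => ?_) hbound
    rw [hP (k + 1) k.succ_pos]
    push_cast
    ring_nf
  refine ⟨hsolution ℓ hℓ hineq, fun ℓ' hℓ' hineq' => ?_⟩
  exact strictMonoOn_mul_exp_mul_integral_exp.injOn hℓ'.le hℓ.le
    ((hsolution ℓ' hℓ' hineq').trans (hsolution ℓ hℓ hineq).symm)
end
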